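/- arXiv:2203.09327 — 3 statements merged into one kernel-verified Lean document; each statement's English description precedes it below -/
import Mathlib

section
/- Let N_i be a positive integer, M a finite set of stations, F : M → Finset V feasibility sets over a finite vertex set V, and x : M → ℝ≥0 with ∑_{j∈M} x_j = 1. Suppose that for every proper subset S ⊊ M, N_i·∑_{j∈S} x_j ≤ max(0, |⋃_{j∈S} F_j| − |S|), and that |⋃_{j∈M} F_j| = N_i. Then any n : M → ℕ with n_j ∈ {⌊N_i·x_j⌋, ⌈N_i·x_j⌉} for all j and ∑_{j∈M} n_j = N_i satisfies the Hall condition: for every S ⊆ M, ∑_{j∈S} n_j ≤ |⋃_{j∈S} F_j|. -/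
/-!
Every rounded value satisfies `n_j ≤ ⌈N x_j⌉ < N x_j + 1`. For a proper subset `S` the
constraint gives either `N ∑_S x_j ≤ |F(S)| - |S|`, and then the strict bounds sum to
`∑_S n_j < |F(S)|`, or `N ∑_S x_j ≤ 0`, which forces every `x_j` on `S` to vanish and hence
every `n_j` to be `0`. For `S = M` both sides equal `N`.
-/

open Finset

section CeilBounds

variable {ι K : Type*} [Field K] [LinearOrder K] [IsStrictOrderedRing K] [FloorRing K]
  {s : Finset ι} {n : ι → ℕ} {y : ι → K}

theorem sum_le_of_le_ceil_of_sum_le_sub_card {k : ℕ} (hn : ∀ j ∈ s, (n j : ℤ) ≤ ⌈y j⌉)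
    (hy : ∑ j ∈ s, y j ≤ k - s.card) : ∑ j ∈ s, n j ≤ k := by
  rcases s.eq_empty_or_nonempty with rfl | hs
  · simp
  have hlt : ∀ j ∈ s, (n j : K) < y j + 1 := fun j hj =>
    lt_of_le_of_lt (by exact_mod_cast hn j hj) (Int.ceil_lt_add_one (y j))
  have hsum : ∑ j ∈ s, (n j : K) < k :=
    calc ∑ j ∈ s, (n j : K) < ∑ j ∈ s, (y j + 1) := sum_lt_sum_of_nonempty hs hlt
      _ = ∑ j ∈ s, y j + s.card := by simp [sum_add_distrib]
      _ ≤ k := by linarith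
  exact_mod_cast hsum.le

theorem sum_eq_zero_of_le_ceil_of_sum_nonpos (hn : ∀ j ∈ s, (n j : ℤ) ≤ ⌈y j⌉)
    (hy0 : ∀ j ∈ s, 0 ≤ y j) (hy : ∑ j ∈ s, y j ≤ 0) : ∑ j ∈ s, n j = 0 := by
  have hzero : ∀ j ∈ s, y j = 0 :=
    (sum_eq_zero_iff_of_nonneg hy0).mp (le_antisymm hy (sum_nonneg hy0))
  refine sum_eq_zero fun j hj => ?_
  have := hn j hj
  rw [hzero j hj, Int.ceil_zero] at this
  omega

end CeilBounds

theorem stmt1_general {ι V : Type*} [DecidableEq ι] [DecidableEq V]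
    (Ni : ℕ) (M : Finset ι) (F : ι → Finset V)
    (x : ι → ℝ) (hx0 : ∀ j ∈ M, 0 ≤ x j)
    (hconstr : ∀ S ⊆ M, S ≠ M →
      (Ni : ℝ) * ∑ j ∈ S, x j ≤ max 0 (((S.biUnion F).card : ℝ) - S.card))
    (hfull : (M.biUnion F).card = Ni)
    (n : ι → ℕ)
    (hn : ∀ j ∈ M, (n j : ℤ) = ⌊(Ni : ℝ) * x j⌋ ∨ (n j : ℤ) = ⌈(Ni : ℝ) * x j⌉)
    (hnsum : ∑ j ∈ M, n j = Ni) :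
    ∀ S ⊆ M, ∑ j ∈ S, n j ≤ (S.biUnion F).card := by
  intro S hS
  rcases eq_or_ne S M with rfl | hne
  · rw [hnsum, hfull]
  have hceil : ∀ j ∈ S, (n j : ℤ) ≤ ⌈(Ni : ℝ) * x j⌉ := fun j hj =>
    (hn j (hS hj)).elim (fun h => h ▸ Int.floor_le_ceil _) le_of_eq
  have hbound := hconstr S hS hne
  rw [mul_sum, le_max_iff] at hbound
  rcases hbound with hnonpos | hslack
  · have hy0 : ∀ j ∈ S, 0 ≤ (Ni : ℝ) * x j := fun j hj =>
      mul_nonneg Ni.cast_nonneg (hx0 j (hS hj))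
    rw [sum_eq_zero_of_le_ceil_of_sum_nonpos hceil hy0 hnonpos]
    exact Nat.zero_le _
  · exact sum_le_of_le_ceil_of_sum_le_sub_card hceil hslack

/-- Tightened continuous constraints guarantee the discrete Hall condition for
any consistent rounding. -/
theorem stmt1 {ι V : Type*} [DecidableEq ι] [DecidableEq V]
    (Ni : ℕ) (hNi : 0 < Ni) (M : Finset ι) (F : ι → Finset V)
    (x : ι → ℝ) (hx0 : ∀ j ∈ M, 0 ≤ x j) (hx1 : ∑ j ∈ M, x j = 1)
    (hconstr : ∀ S ⊆ M, S ≠ M →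
      (Ni : ℝ) * ∑ j ∈ S, x j ≤ max 0 (((S.biUnion F).card : ℝ) - S.card))
    (hfull : (M.biUnion F).card = Ni)
    (n : ι → ℕ)
    (hn : ∀ j ∈ M, (n j : ℤ) = ⌊(Ni : ℝ) * x j⌋ ∨ (n j : ℤ) = ⌈(Ni : ℝ) * x j⌉)
    (hnsum : ∑ j ∈ M, n j = Ni) :
    ∀ S ⊆ M, ∑ j ∈ S, n j ≤ (S.biUnion F).card :=
  stmt1_general Ni M F x hx0 hconstr hfull n hn hnsum
end

section
/- Let C be a finite index set, m a positive integer, N : C → ℝ with N_i > 0 for all i, A_G an m×m positive definite diagonal matrix, and b_G ∈ ℝ^m. Define for each i the cost J^i(x^i, x^{-i}) = (1/2)·N_i²·(x^i)ᵀ A_G x^i + N_i·(x^i)ᵀ(A_G·σ(x^{-i}) + b_G), where σ(x^{-i}) = ∑_{j≠i} N_j x^j, and J_G(x) = (1/2)·σ(x)ᵀ A_G σ(x) + b_Gᵀ σ(x) with σ(x) = ∑_i N_i x^i. Then for all i and all x, the gradient of J^i with respect to x^i equals the gradient of J_G with respect to x^i, i.e., J_G is an exact potential for the game. -/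
/-!
Write `σ(x) = N_i • x^i + s` with `s = σ(x^{-i})` independent of `x^i`. Because `A_G` is
symmetric, expanding `J_G` in `x^i` gives exactly `J^i(x^i, x^{-i})` plus the constant
`½ sᵀ A_G s + b_Gᵀ s`, so the two functions of `x^i` have the same derivative.
-/

open Matrix Finset

theorem Matrix.IsSymm.dotProduct_mulVec_comm {n R : Type*} [Fintype n] [CommSemiring R]
    {A : Matrix n n R} (hA : A.IsSymm) (u v : n → R) :
    u ⬝ᵥ A *ᵥ v = v ⬝ᵥ A *ᵥ u := by
  rw [dotProduct_mulVec, dotProduct_comm, ← mulVec_transpose, hA.eq]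

theorem Finset.sum_smul_update {ι R M : Type*} [Fintype ι] [DecidableEq ι] [Semiring R]
    [AddCommMonoid M] [Module R M] (c : ι → R) (x : ι → M) (i : ι) (y : M) :
    ∑ j, c j • Function.update x i y j = c i • y + ∑ j ∈ univ.erase i, c j • x j := by
  rw [← add_sum_erase _ _ (mem_univ i), Function.update_self]
  congr 1
  refine sum_congr rfl fun j hj => ?_
  rw [Function.update_of_ne (ne_of_mem_erase hj)]

theorem Matrix.IsSymm.quadratic_smul_add {n K : Type*} [Fintype n] [Field K] [NeZero (2 : K)]
    {A : Matrix n n K} (hA : A.IsSymm) (b s y : n → K) (a : K) :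
    (1 / 2) * ((a • y + s) ⬝ᵥ A *ᵥ (a • y + s)) + b ⬝ᵥ (a • y + s)
      = ((1 / 2) * a ^ 2 * (y ⬝ᵥ A *ᵥ y) + a * (y ⬝ᵥ (A *ᵥ s + b)))
        + ((1 / 2) * (s ⬝ᵥ A *ᵥ s) + b ⬝ᵥ s) := by
  simp only [add_dotProduct, mulVec_add, dotProduct_add, mulVec_smul, smul_dotProduct,
    dotProduct_smul, smul_eq_mul, hA.dotProduct_mulVec_comm s y, dotProduct_comm b y]
  field_simp
  ring

theorem stmt4_general {C : Type*} [Fintype C] [DecidableEq C] (m : ℕ)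
    (N : C → ℝ) (AG : Matrix (Fin m) (Fin m) ℝ)
    (hpd : AG.PosDef) (bG : Fin m → ℝ) :
    ∀ (i : C) (x : C → Fin m → ℝ),
      fderiv ℝ (fun y : Fin m → ℝ =>
          (1 / 2) * (N i) ^ 2 * (y ⬝ᵥ AG *ᵥ y)
            + N i * (y ⬝ᵥ (AG *ᵥ (∑ j ∈ univ.erase i, N j • x j) + bG))) (x i)
      = fderiv ℝ (fun y : Fin m → ℝ =>
          (1 / 2) * ((∑ j, N j • Function.update x i y j) ⬝ᵥ
              AG *ᵥ (∑ j, N j • Function.update x i y j))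
            + bG ⬝ᵥ (∑ j, N j • Function.update x i y j)) (x i) := by
  intro i x
  have hsymm : AG.IsSymm := isHermitian_iff_isSymm.mp hpd.isHermitian
  simp only [sum_smul_update, hsymm.quadratic_smul_add]
  exact (fderiv_add_const _).symm

/-- Exact potential property: the partial derivative of each company's cost
with respect to its own decision equals the partial derivative of the
government's objective. -/
theorem stmt4 {C : Type*} [Fintype C] [DecidableEq C] (m : ℕ)
    (N : C → ℝ) (hN : ∀ i, 0 < N i)
    (d : Fin m → ℝ) (AG : Matrix (Fin m) (Fin m) ℝ) (hAG : AG = Matrix.diagonal d)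
    (hpd : AG.PosDef) (bG : Fin m → ℝ) :
    ∀ (i : C) (x : C → Fin m → ℝ),
      fderiv ℝ (fun y : Fin m → ℝ =>
          (1 / 2) * (N i) ^ 2 * (y ⬝ᵥ AG *ᵥ y)
            + N i * (y ⬝ᵥ (AG *ᵥ (∑ j ∈ univ.erase i, N j • x j) + bG))) (x i)
      = fderiv ℝ (fun y : Fin m → ℝ =>
          (1 / 2) * ((∑ j, N j • Function.update x i y j) ⬝ᵥ
              AG *ᵥ (∑ j, N j • Function.update x i y j))
            + bG ⬝ᵥ (∑ j, N j • Function.update x i y j)) (x i) :=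
  stmt4_general m N AG hpd bG
end

section
/- Let K ⊆ ℝ^n be nonempty, compact and convex, and H : K → K non-expansive. Then the Krasnoselskij iteration x(k+1) = (1/2)(x(k) + H(x(k))), starting from any x(0) ∈ K, converges to a fixed point of H. -/
open Filter Topology Function

/-! Fixed points exist: for `t ∈ (0, 1]` the map `y ↦ t • p₀ + (1 - t) • H y` is a contraction
of `K`, its fixed point is a `t * diam K`-approximate fixed point of `H`, and these accumulate at
a fixed point. For any fixed point `z` the parallelogram law gives the Fejér inequality
`‖x (k+1) - z‖² ≤ ‖x k - z‖² - ‖H (x k) - x k‖² / 4`, so the residuals `H (x k) - x k` tend to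
zero and every cluster point of the iterates is a fixed point; since the distance to that fixed
point is non-increasing, the whole sequence converges to it. -/

section FixedPoint

variable {E : Type*} [NormedAddCommGroup E]

theorem ContinuousOn.isFixedPt_of_tendsto_sub {H : E → E} {K : Set E} {ι : Type*} {l : Filter ι}
    [l.NeBot] {u : ι → E} {z : E} (hH : ContinuousOn H K) (hu : ∀ i, u i ∈ K) (hz : z ∈ K)
    (hlim : Tendsto u l (𝓝 z)) (hres : Tendsto (fun i => H (u i) - u i) l (𝓝 0)) :
    IsFixedPt H z := by
  have hHu : Tendsto (fun i => H (u i)) l (𝓝 (H z)) :=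
    (hH z hz).tendsto.comp (tendsto_nhdsWithin_iff.mpr ⟨hlim, Eventually.of_forall hu⟩)
  have hHu' : Tendsto (fun i => H (u i)) l (𝓝 z) := by
    simpa using hlim.add hres
  exact tendsto_nhds_unique hHu hHu'

variable [NormedSpace ℝ E] {K : Set E} {H : E → E}

theorem exists_norm_sub_le_mul_diam_of_lipschitzOnWith_one (hKcomp : IsComplete K)
    (hKbdd : Bornology.IsBounded K) (hKconv : Convex ℝ K) (hmaps : Set.MapsTo H K K)
    (hH : LipschitzOnWith 1 H K) {p₀ : E} (hp₀ : p₀ ∈ K) {t : ℝ} (ht₀ : 0 < t) (ht₁ : t ≤ 1) :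
    ∃ q ∈ K, ‖H q - q‖ ≤ t * Metric.diam K := by
  set G : E → E := fun y => t • p₀ + (1 - t) • H y
  have hGmaps : Set.MapsTo G K K := fun y hy =>
    hKconv hp₀ (hmaps hy) ht₀.le (by linarith) (by ring)
  have hGlip : LipschitzOnWith (Real.toNNReal (1 - t)) G K := by
    refine LipschitzOnWith.of_dist_le_mul fun a ha b hb => ?_
    have hab : G a - G b = (1 - t) • (H a - H b) := by simp only [G]; module
    rw [dist_eq_norm, hab, norm_smul, Real.norm_of_nonneg (by linarith),
      Real.coe_toNNReal _ (by linarith), ← dist_eq_norm]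
    exact mul_le_mul_of_nonneg_left (by simpa using hH.dist_le_mul a ha b hb) (by linarith)
  have hGcontr : ContractingWith (Real.toNNReal (1 - t)) (hGmaps.restrict G K K) :=
    ⟨by rw [← Real.toNNReal_one]; exact Real.toNNReal_lt_toNNReal_iff_of_nonneg (by linarith)
      |>.mpr (by linarith), hGlip.mapsToRestrict hGmaps⟩
  obtain ⟨q, hqK, hq, -⟩ :=
    hGcontr.exists_fixedPoint' hKcomp hGmaps hp₀ (edist_ne_top _ _)
  refine ⟨q, hqK, ?_⟩
  have hres : H q - q = t • (H q - p₀) :=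
    calc H q - q = H q - G q := by rw [hq.eq]
      _ = t • (H q - p₀) := by simp only [G]; module
  rw [hres, norm_smul, Real.norm_of_nonneg ht₀.le, ← dist_eq_norm]
  exact mul_le_mul_of_nonneg_left (Metric.dist_le_diam_of_mem hKbdd (hmaps hqK) hp₀) ht₀.le

theorem exists_isFixedPt_of_lipschitzOnWith_one (hKne : K.Nonempty) (hKcomp : IsCompact K)
    (hKconv : Convex ℝ K) (hmaps : Set.MapsTo H K K) (hH : LipschitzOnWith 1 H K) :
    ∃ p ∈ K, IsFixedPt H p := by
  obtain ⟨p₀, hp₀⟩ := hKne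
  have happrox (m : ℕ) : ∃ q ∈ K, ‖H q - q‖ ≤ 1 / ((m : ℝ) + 1) * Metric.diam K :=
    exists_norm_sub_le_mul_diam_of_lipschitzOnWith_one hKcomp.isComplete hKcomp.isBounded
      hKconv hmaps hH hp₀ (by positivity) (div_le_one_of_le₀ (by simp) (by positivity))
  choose q hqK hq using happrox
  have hres : Tendsto (fun m => H (q m) - q m) atTop (𝓝 0) :=
    squeeze_zero_norm hq <| by
      simpa using (tendsto_one_div_add_atTop_nhds_zero_nat (𝕜 := ℝ)).mul_const (Metric.diam K)
  obtain ⟨p, hpK, φ, hφ, hqφ⟩ := hKcomp.tendsto_subseq hqK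
  exact ⟨p, hpK, hH.continuousOn.isFixedPt_of_tendsto_sub (fun _ => hqK _) hpK hqφ
    (hres.comp hφ.tendsto_atTop)⟩

end FixedPoint

theorem tendsto_of_antitone_dist_of_tendsto_subseq {α : Type*} [PseudoMetricSpace α]
    {x : ℕ → α} {z : α} (hanti : Antitone fun k => dist (x k) z) {φ : ℕ → ℕ}
    (hφ : StrictMono φ) (hsub : Tendsto (x ∘ φ) atTop (𝓝 z)) : Tendsto x atTop (𝓝 z) := by
  rw [tendsto_iff_dist_tendsto_zero] at hsub ⊢
  exact (tendsto_iff_tendsto_subseq_of_antitone hanti hφ.tendsto_atTop).mpr hsub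

section Krasnoselskij

variable {E : Type*} [NormedAddCommGroup E] [InnerProductSpace ℝ E]

theorem norm_half_smul_add_sub_sq_le {a b z : E} (h : ‖b - z‖ ≤ ‖a - z‖) :
    ‖(1 / 2 : ℝ) • (a + b) - z‖ ^ 2 ≤ ‖a - z‖ ^ 2 - ‖b - a‖ ^ 2 / 4 := by
  have hmid : (1 / 2 : ℝ) • (a + b) - z = (1 / 2 : ℝ) • ((a - z) + (b - z)) := by module
  have hdiff : (a - z) - (b - z) = -(b - a) := by abel
  have hpar := parallelogram_law_with_norm ℝ (a - z) (b - z)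
  rw [hdiff, norm_neg] at hpar
  rw [hmid, norm_smul, Real.norm_of_nonneg (by norm_num)]
  nlinarith [norm_nonneg (b - z), norm_nonneg (a - z)]

variable {K : Set E} {H : E → E} {x : ℕ → E}

theorem krasnoselskij_mem (hKconv : Convex ℝ K) (hmaps : Set.MapsTo H K K) (hx₀ : x 0 ∈ K)
    (hiter : ∀ k, x (k + 1) = (1 / 2 : ℝ) • (x k + H (x k))) (k : ℕ) : x k ∈ K := by
  induction k with
  | zero => exact hx₀
  | succ k ih =>
    rw [hiter k, smul_add]
    exact hKconv ih (hmaps ih) (by norm_num) (by norm_num) (by norm_num)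

theorem krasnoselskij_norm_sub_sq_succ_le (hKconv : Convex ℝ K) (hmaps : Set.MapsTo H K K)
    (hH : LipschitzOnWith 1 H K) (hx₀ : x 0 ∈ K)
    (hiter : ∀ k, x (k + 1) = (1 / 2 : ℝ) • (x k + H (x k))) {z : E} (hzK : z ∈ K)
    (hz : IsFixedPt H z) (k : ℕ) :
    ‖x (k + 1) - z‖ ^ 2 ≤ ‖x k - z‖ ^ 2 - ‖H (x k) - x k‖ ^ 2 / 4 := by
  rw [hiter k]
  apply norm_half_smul_add_sub_sq_le
  simpa [hz.eq, dist_eq_norm] using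
    hH.dist_le_mul _ (krasnoselskij_mem hKconv hmaps hx₀ hiter k) _ hzK

theorem krasnoselskij_antitone_norm_sub (hKconv : Convex ℝ K) (hmaps : Set.MapsTo H K K)
    (hH : LipschitzOnWith 1 H K) (hx₀ : x 0 ∈ K)
    (hiter : ∀ k, x (k + 1) = (1 / 2 : ℝ) • (x k + H (x k))) {z : E} (hzK : z ∈ K)
    (hz : IsFixedPt H z) : Antitone fun k => ‖x k - z‖ :=
  antitone_nat_of_succ_le fun k => by
    have := krasnoselskij_norm_sub_sq_succ_le hKconv hmaps hH hx₀ hiter hzK hz k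
    nlinarith [norm_nonneg (x k - z), norm_nonneg (x (k + 1) - z), sq_nonneg ‖H (x k) - x k‖]

theorem krasnoselskij_tendsto_sub_zero (hKconv : Convex ℝ K) (hmaps : Set.MapsTo H K K)
    (hH : LipschitzOnWith 1 H K) (hx₀ : x 0 ∈ K)
    (hiter : ∀ k, x (k + 1) = (1 / 2 : ℝ) • (x k + H (x k))) {p : E} (hpK : p ∈ K)
    (hp : IsFixedPt H p) : Tendsto (fun k => H (x k) - x k) atTop (𝓝 0) := by
  set d : ℕ → ℝ := fun k => ‖x k - p‖
  have hd : Tendsto d atTop (𝓝 (⨅ k, d k)) :=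
    tendsto_atTop_ciInf (krasnoselskij_antitone_norm_sub hKconv hmaps hH hx₀ hiter hpK hp)
      ⟨0, by rintro _ ⟨k, rfl⟩; positivity⟩
  have hdrop : Tendsto (fun k => 4 * (d k ^ 2 - d (k + 1) ^ 2)) atTop (𝓝 0) := by
    simpa using ((hd.pow 2).sub ((hd.comp (tendsto_add_atTop_nat 1)).pow 2)).const_mul 4
  have hsq : Tendsto (fun k => ‖H (x k) - x k‖ ^ 2) atTop (𝓝 0) :=
    squeeze_zero (fun _ => sq_nonneg _) (fun k => by
      linarith [krasnoselskij_norm_sub_sq_succ_le hKconv hmaps hH hx₀ hiter hpK hp k]) hdrop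
  refine squeeze_zero_norm (fun _ => le_rfl) ?_
  simpa using hsq.sqrt

end Krasnoselskij

/-- Krasnoselskij iteration: averaged iterates of a non-expansive self-map of a
nonempty compact convex set converge to a fixed point. -/
theorem stmt18 (n : ℕ) (K : Set (EuclideanSpace ℝ (Fin n)))
    (hKne : K.Nonempty) (hKcomp : IsCompact K) (hKconv : Convex ℝ K)
    (H : EuclideanSpace ℝ (Fin n) → EuclideanSpace ℝ (Fin n))
    (hmaps : Set.MapsTo H K K) (hnonexp : LipschitzOnWith 1 H K)
    (x : ℕ → EuclideanSpace ℝ (Fin n)) (hx0 : x 0 ∈ K)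
    (hiter : ∀ k, x (k + 1) = (1 / 2 : ℝ) • (x k + H (x k))) :
    ∃ p ∈ K, H p = p ∧ Tendsto x atTop (nhds p) := by
  obtain ⟨p, hpK, hp⟩ := exists_isFixedPt_of_lipschitzOnWith_one hKne hKcomp hKconv hmaps hnonexp
  have hres := krasnoselskij_tendsto_sub_zero hKconv hmaps hnonexp hx0 hiter hpK hp
  have hxK := krasnoselskij_mem hKconv hmaps hx0 hiter
  obtain ⟨z, hzK, φ, hφ, hxφ⟩ := hKcomp.tendsto_subseq hxK
  have hz : IsFixedPt H z :=
    hnonexp.continuousOn.isFixedPt_of_tendsto_sub (fun _ => hxK _) hzK hxφ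
      (hres.comp hφ.tendsto_atTop)
  refine ⟨z, hzK, hz, tendsto_of_antitone_dist_of_tendsto_subseq ?_ hφ hxφ⟩
  simpa only [dist_eq_norm] using
    krasnoselskij_antitone_norm_sub hKconv hmaps hnonexp hx0 hiter hzK hz
end
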